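/- (Inverse Euler identity) For all complex x and 0 < q < 1, ∑_{k=0}^∞ (-1)^k q^{k(k-1)/2} x^k / (q;q)_k = (x;q)_∞. -/

import Mathlib

open Finset

noncomputable def qPoch (q a : ℂ) (n : ℕ) : ℂ := ∏ j ∈ Finset.range n, (1 - a * q ^ j)

noncomputable def qPochInf (q a : ℂ) : ℂ := ∏' j : ℕ, (1 - a * q ^ j)

noncomputable def cauchyP (q x y : ℂ) (n : ℕ) : ℂ := ∏ j ∈ Finset.range n, (x - q ^ j * y)

noncomputable def qBinom (q : ℂ) (n k : ℕ) : ℂ := qPoch q q n / (qPoch q q k * qPoch q q (n - k))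

noncomputable def qDeriv (q : ℂ) (f : ℂ → ℂ) : ℂ → ℂ := fun x => (f x - f (q * x)) / x

noncomputable def qTheta (q : ℂ) (f : ℂ → ℂ → ℂ) : ℂ → ℂ → ℂ :=
  fun x y => (f (q⁻¹ * x) y - f x (q * y)) / (q⁻¹ * x - y)

/-- `₁Φ₁(a; 0; q, z)` -/
noncomputable def phi11 (q a z : ℂ) : ℂ :=
  ∑' m : ℕ, (-1) ^ m * q ^ m.choose 2 * qPoch q a m * z ^ m / qPoch q q m

/-- generalized Cauchy polynomials `p_n(x,y,a)` -/
noncomputable def genCauchy (q a x y : ℂ) (n : ℕ) : ℂ :=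
  ∑ k ∈ Finset.range (n + 1),
    qBinom q n k * (-1) ^ k * q ^ k.choose 2 * qPoch q a k * x ^ (n - k) * y ^ k

/-- generalized Hahn polynomials `h_n(x,y,a,b|q)` -/
noncomputable def hahn (q x y a b : ℂ) (n : ℕ) : ℂ :=
  ∑ k ∈ Finset.range (n + 1),
    qBinom q n k * (-1) ^ k * q ^ k.choose 2 * b ^ k * qPoch q a k * cauchyP q y x (n - k)

/-!
Put `F(x) = ∑ₖ (-1)ᵏ q^(k choose 2) xᵏ / (q;q)ₖ`. The ratio of consecutive terms tends to `0`, so `F`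
is entire, and comparing coefficients gives the functional equation `F(x) = (1 - x) F(qx)`.
Iterating, `F(x) = (x;q)ₙ F(qⁿx)`, and letting `n → ∞` with `F(qⁿx) → F(0) = 1` yields
`F(x) = (x;q)_∞`.
-/

open Filter Topology

noncomputable def eulerCoeff (q : ℂ) (k : ℕ) : ℂ := (-1) ^ k * q ^ k.choose 2 / qPoch q q k

noncomputable def eulerSeries (q x : ℂ) : ℂ := ∑' k, eulerCoeff q k * x ^ k

variable {q : ℂ}

lemma one_sub_pow_ne_zero_of_norm_lt_one (hq : ‖q‖ < 1) {n : ℕ} (hn : n ≠ 0) : 1 - q ^ n ≠ 0 := by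
  intro h
  have h1 : ‖q ^ n‖ = 1 := by rw [← sub_eq_zero.1 h, norm_one]
  exact (pow_lt_one₀ (norm_nonneg q) hq hn).ne (by rwa [← norm_pow])

lemma qPoch_succ (q a : ℂ) (n : ℕ) : qPoch q a (n + 1) = qPoch q a n * (1 - a * q ^ n) :=
  Finset.prod_range_succ _ n

lemma qPoch_self_ne_zero (hq : ‖q‖ < 1) (n : ℕ) : qPoch q q n ≠ 0 :=
  Finset.prod_ne_zero_iff.2 fun j _ => by
    rw [← pow_succ']
    exact one_sub_pow_ne_zero_of_norm_lt_one hq j.succ_ne_zero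

lemma eulerCoeff_zero (q : ℂ) : eulerCoeff q 0 = 1 := by simp [eulerCoeff, qPoch]

lemma eulerCoeff_succ (hq : ‖q‖ < 1) (k : ℕ) :
    eulerCoeff q (k + 1) = -(q ^ k / (1 - q ^ (k + 1))) * eulerCoeff q k := by
  have hchoose : (k + 1).choose 2 = k.choose 2 + k := by
    rw [Nat.choose_succ_succ, Nat.choose_one_right, add_comm]
  rw [eulerCoeff, eulerCoeff, qPoch_succ, hchoose, ← pow_succ']
  field_simp [qPoch_self_ne_zero hq k, one_sub_pow_ne_zero_of_norm_lt_one hq k.succ_ne_zero]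
  ring

lemma summable_eulerCoeff_mul_pow (hq : ‖q‖ < 1) (y : ℂ) :
    Summable fun k => eulerCoeff q k * y ^ k := by
  have hratio : Tendsto (fun n => q ^ n * y / (1 - q * q ^ n)) atTop (𝓝 0) := by
    have hpow := tendsto_pow_atTop_nhds_zero_of_norm_lt_one hq
    have h := (hpow.mul_const y).div ((hpow.const_mul q).const_sub 1) (by simp)
    rwa [zero_mul, mul_zero, sub_zero, zero_div] at h
  refine summable_of_ratio_norm_eventually_le (r := 1 / 2) (by norm_num) ?_
  filter_upwards [hratio.norm.eventually_le_const (by norm_num : ‖(0 : ℂ)‖ < 1 / 2)] with n hn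
  have hstep : eulerCoeff q (n + 1) * y ^ (n + 1) =
      -(q ^ n * y / (1 - q * q ^ n)) * (eulerCoeff q n * y ^ n) := by
    rw [eulerCoeff_succ hq, pow_succ, pow_succ']; ring
  rw [hstep, norm_mul, norm_neg]
  gcongr

lemma eulerSeries_eq_one_sub_mul (hq : ‖q‖ < 1) (y : ℂ) :
    eulerSeries q y = (1 - y) * eulerSeries q (q * y) := by
  have hy := summable_eulerCoeff_mul_pow hq y
  have hqy := summable_eulerCoeff_mul_pow hq (q * y)
  have hterm : ∀ k, eulerCoeff q (k + 1) * y ^ (k + 1) - eulerCoeff q (k + 1) * (q * y) ^ (k + 1) =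
      -y * (eulerCoeff q k * (q * y) ^ k) := fun k => by
    rw [eulerCoeff_succ hq]
    field_simp [one_sub_pow_ne_zero_of_norm_lt_one hq k.succ_ne_zero]
    ring
  have hdiff : eulerSeries q y - eulerSeries q (q * y) = -y * eulerSeries q (q * y) := by
    rw [eulerSeries, eulerSeries, ← hy.tsum_sub hqy, (hy.sub hqy).tsum_eq_zero_add]
    simp only [pow_zero, mul_one, sub_self, zero_add, hterm, tsum_mul_left]
  linear_combination hdiff

lemma eulerSeries_eq_qPoch_mul (hq : ‖q‖ < 1) (x : ℂ) (n : ℕ) :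
    eulerSeries q x = qPoch q x n * eulerSeries q (q ^ n * x) := by
  induction n with
  | zero => simp [qPoch]
  | succ n ih =>
    rw [ih, eulerSeries_eq_one_sub_mul hq (q ^ n * x), qPoch_succ, ← mul_assoc q, ← pow_succ']
    ring

lemma continuousOn_eulerSeries (hq : ‖q‖ < 1) (R : ℝ) :
    ContinuousOn (eulerSeries q) (Metric.closedBall 0 R) := by
  refine continuousOn_tsum (fun k => by fun_prop) (summable_eulerCoeff_mul_pow hq R).norm ?_
  intro k y hy
  rw [norm_mul, norm_mul, norm_pow, norm_pow, Complex.norm_real]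
  gcongr
  exact (mem_closedBall_zero_iff.1 hy).trans (le_abs_self R)

lemma eulerSeries_zero (q : ℂ) : eulerSeries q 0 = 1 := by
  rw [eulerSeries, tsum_eq_single 0 fun k hk => by simp [hk], pow_zero, mul_one, eulerCoeff_zero]

lemma tendsto_eulerSeries_pow_mul (hq : ‖q‖ < 1) (x : ℂ) :
    Tendsto (fun n => eulerSeries q (q ^ n * x)) atTop (𝓝 1) := by
  have hcont := (continuousOn_eulerSeries hq ‖x‖).continuousWithinAt
    (Metric.mem_closedBall_self (norm_nonneg x))
  have hlim : Tendsto (fun n => q ^ n * x) atTop (𝓝[Metric.closedBall 0 ‖x‖] 0) := by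
    refine tendsto_nhdsWithin_iff.2 ⟨?_, Eventually.of_forall fun n => ?_⟩
    · simpa using (tendsto_pow_atTop_nhds_zero_of_norm_lt_one hq).mul_const x
    · rw [mem_closedBall_zero_iff, norm_mul, norm_pow]
      exact mul_le_of_le_one_left (norm_nonneg x) (pow_le_one₀ (norm_nonneg q) hq.le)
  rw [← eulerSeries_zero q]
  exact hcont.tendsto.comp hlim

lemma multipliable_one_sub_mul_pow (hq : ‖q‖ < 1) (a : ℂ) :
    Multipliable fun j : ℕ => 1 - a * q ^ j := by
  simpa [sub_eq_add_neg] using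
    Complex.multipliable_one_add_of_summable ((summable_geometric_of_norm_lt_one hq).mul_left a).neg

theorem eulerSeries_eq_qPochInf (hq : ‖q‖ < 1) (x : ℂ) : eulerSeries q x = qPochInf q x := by
  have hprod : Tendsto (fun n => qPoch q x n * eulerSeries q (q ^ n * x)) atTop
      (𝓝 (qPochInf q x * 1)) :=
    (multipliable_one_sub_mul_pow hq x).hasProd.tendsto_prod_nat.mul (tendsto_eulerSeries_pow_mul hq x)
  rw [mul_one] at hprod
  exact tendsto_nhds_unique (tendsto_const_nhds.congr (eulerSeries_eq_qPoch_mul hq x)) hprod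

theorem stmt5 (q : ℝ) (hq0 : 0 < q) (hq1 : q < 1) (x : ℂ) :
    ∑' k : ℕ, (-1) ^ k * (q : ℂ) ^ k.choose 2 * x ^ k / qPoch (q : ℂ) (q : ℂ) k =
      qPochInf (q : ℂ) x := by
  have hq : ‖(q : ℂ)‖ < 1 := by
    rw [Complex.norm_real, Real.norm_eq_abs, abs_lt]
    constructor <;> linarith
  rw [← eulerSeries_eq_qPochInf hq]
  exact tsum_congr fun k => by rw [eulerCoeff]; ring
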